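/- For λ₁, λ₂ ∈ (-1,1) and r ∈ ℝ, the area density factor cosh²(r) + (λ₁+λ₂)sinh(r)cosh(r) + λ₁λ₂ sinh²(r) is strictly positive. -/
import Mathlib

theorem parallel_area_density_positive (l1 l2 : ℝ) (h1 : l1 ∈ Set.Ioo (-1:ℝ) 1)
    (h2 : l2 ∈ Set.Ioo (-1:ℝ) 1) (r : ℝ) :
    0 < (Real.cosh r) ^ 2 + (l1 + l2) * Real.sinh r * Real.cosh r +
      l1 * l2 * (Real.sinh r) ^ 2 := by
  obtain ⟨a1, b1⟩ := h1
  obtain ⟨a2, b2⟩ := h2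
  have hs : |Real.sinh r| < Real.cosh r := abs_lt.mpr ⟨by nlinarith [Real.cosh_sq r, Real.cosh_pos r], by nlinarith [Real.cosh_sq r, Real.cosh_pos r]⟩
  have key : ∀ l : ℝ, -1 < l → l < 1 → 0 < Real.cosh r + l * Real.sinh r := by
    intro l hl1 hl2
    have : |l * Real.sinh r| < Real.cosh r := by
      rw [abs_mul]
      calc |l| * |Real.sinh r| ≤ 1 * |Real.sinh r| := by
            apply mul_le_mul_of_nonneg_right _ (abs_nonneg _)
            exact le_of_lt (abs_lt.mpr ⟨hl1, hl2⟩)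
        _ < Real.cosh r := by simpa using hs
    linarith [neg_abs_le (l * Real.sinh r)]
  have f1 := key l1 a1 b1
  have f2 := key l2 a2 b2
  nlinarith [mul_pos f1 f2]
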